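/- arXiv:2012.01698 — 4 statements merged into one kernel-verified Lean document; each statement's English description precedes it below -/
import Mathlib

section
/- Let 1 ≤ p ≤ ∞, let f, f̃ : ℝ^d → ℝ^d and h, h̃ : ℝ^d → ℝ^q be functions, and suppose f is Lipschitz with constant L_f > 0 and h is Lipschitz with constant L_h > 0, both with respect to the p-norm. Assume that ‖f(x) − f̃(x)‖_p ≤ e₁ and ‖h(x) − h̃(x)‖_p ≤ e₃ for all x ∈ ℝ^d, for some e₁, e₃ > 0. Then for every integer K ≥ 1 and every x ∈ ℝ^d, ‖h(f^K(x)) − h̃(f̃^K(x))‖_p ≤ L_h (∑_{j=0}^{K−1} L_f^j) e₁ + e₃, where f^K denotes the K-fold composition f ∘ f ∘ ⋯ ∘ f. -/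
/-!
Comparing `g u` with `g' v` through `g v` costs `L ‖u - v‖ + e` for an `L`-Lipschitz `g` that is
uniformly `e`-close to `g'`. Applied step by step to the iterates of `f` and `f'`, this gives the
recursion `δ (n + 1) ≤ L_f δ n + e₁` for their distance, hence `δ K ≤ (∑_{j < K} L_f ^ j) e₁`;
one last application with `h` and `h'` finishes.
-/

open scoped ENNReal

open Finset

variable {E F : Type*} [SeminormedAddCommGroup E] [SeminormedAddCommGroup F]

theorem norm_sub_le_of_lipschitz_of_uniform_approx {g g' : E → F} {L e : ℝ}
    (hLip : ∀ x y, ‖g x - g y‖ ≤ L * ‖x - y‖) (happrox : ∀ x, ‖g x - g' x‖ ≤ e) (u v : E) :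
    ‖g u - g' v‖ ≤ L * ‖u - v‖ + e :=
  calc ‖g u - g' v‖ ≤ ‖g u - g v‖ + ‖g v - g' v‖ := norm_sub_le_norm_sub_add_norm_sub _ _ _
    _ ≤ L * ‖u - v‖ + e := add_le_add (hLip u v) (happrox v)

theorem norm_iterate_sub_iterate_le {f f' : E → E} {L e : ℝ} (hL : 0 ≤ L)
    (hLip : ∀ x y, ‖f x - f y‖ ≤ L * ‖x - y‖) (happrox : ∀ x, ‖f x - f' x‖ ≤ e) (x : E) (n : ℕ) :
    ‖f^[n] x - f'^[n] x‖ ≤ (∑ j ∈ range n, L ^ j) * e := by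
  induction n with
  | zero => simp
  | succ n ih =>
    rw [Function.iterate_succ_apply', Function.iterate_succ_apply']
    calc ‖f (f^[n] x) - f' (f'^[n] x)‖
        ≤ L * ‖f^[n] x - f'^[n] x‖ + e :=
          norm_sub_le_of_lipschitz_of_uniform_approx hLip happrox _ _
      _ ≤ L * ((∑ j ∈ range n, L ^ j) * e) + e := by gcongr
      _ = (∑ j ∈ range (n + 1), L ^ j) * e := by rw [geom_sum_succ]; ring

theorem statement4_general (d q : ℕ) (p : ℝ≥0∞) [Fact (1 ≤ p)]
    (f f' : PiLp p (fun _ : Fin d => ℝ) → PiLp p (fun _ : Fin d => ℝ))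
    (h h' : PiLp p (fun _ : Fin d => ℝ) → PiLp p (fun _ : Fin q => ℝ))
    (Lf Lh e₁ e₃ : ℝ) (hLf : 0 < Lf) (hLh : 0 < Lh)
    (hfLip : ∀ x y, ‖f x - f y‖ ≤ Lf * ‖x - y‖)
    (hhLip : ∀ x y, ‖h x - h y‖ ≤ Lh * ‖x - y‖)
    (hfe : ∀ x, ‖f x - f' x‖ ≤ e₁)
    (hhe : ∀ x, ‖h x - h' x‖ ≤ e₃)
    (K : ℕ) (x : PiLp p (fun _ : Fin d => ℝ)) :
    ‖h (f^[K] x) - h' (f'^[K] x)‖ ≤ Lh * (∑ j ∈ Finset.range K, Lf ^ j) * e₁ + e₃ :=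
  calc ‖h (f^[K] x) - h' (f'^[K] x)‖
      ≤ Lh * ‖f^[K] x - f'^[K] x‖ + e₃ :=
        norm_sub_le_of_lipschitz_of_uniform_approx hhLip hhe _ _
    _ ≤ Lh * ((∑ j ∈ range K, Lf ^ j) * e₁) + e₃ := by
        gcongr
        exact norm_iterate_sub_iterate_le hLf.le hfLip hfe x K
    _ = Lh * (∑ j ∈ range K, Lf ^ j) * e₁ + e₃ := by rw [mul_assoc]

theorem statement4 (d q : ℕ) (p : ℝ≥0∞) [Fact (1 ≤ p)]
    (f f' : PiLp p (fun _ : Fin d => ℝ) → PiLp p (fun _ : Fin d => ℝ))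
    (h h' : PiLp p (fun _ : Fin d => ℝ) → PiLp p (fun _ : Fin q => ℝ))
    (Lf Lh e₁ e₃ : ℝ) (hLf : 0 < Lf) (hLh : 0 < Lh) (he₁ : 0 < e₁) (he₃ : 0 < e₃)
    (hfLip : ∀ x y, ‖f x - f y‖ ≤ Lf * ‖x - y‖)
    (hhLip : ∀ x y, ‖h x - h y‖ ≤ Lh * ‖x - y‖)
    (hfe : ∀ x, ‖f x - f' x‖ ≤ e₁)
    (hhe : ∀ x, ‖h x - h' x‖ ≤ e₃)
    (K : ℕ) (hK : 1 ≤ K) (x : PiLp p (fun _ : Fin d => ℝ)) :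
    ‖h (f^[K] x) - h' (f'^[K] x)‖ ≤ Lh * (∑ j ∈ Finset.range K, Lf ^ j) * e₁ + e₃ :=
  statement4_general d q p f f' h h' Lf Lh e₁ e₃ hLf hLh hfLip hhLip hfe hhe K x
end

section
/- Let 1 ≤ p ≤ ∞, let f, f̃ : ℝ^d → ℝ^d satisfy ‖f(x) − f̃(x)‖_p ≤ δ for all x ∈ ℝ^d, for some δ > 0. Let T > 0, let K ≥ 1 be an integer, and set h = T/K. Let α ∈ ℝ be such that 1 + hα ≥ 0 and the Euler map E(x) = x + h f(x) is Lipschitz with constant 1 + hα with respect to the p-norm. Define Ẽ(x) = x + h f̃(x). Then for every x ∈ ℝ^d, ‖E^K(x) − Ẽ^K(x)‖_p ≤ max{e^{αT}, 1} · T · δ, where E^K and Ẽ^K denote K-fold self-compositions. -/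
/-!
One Euler step of the two schemes differs by at most `h δ`, and the Euler map of `f` propagates an
earlier error with factor `L = 1 + h α`; hence after `K` steps the error is at most
`(1 + L + ⋯ + L^(K-1)) h δ ≤ K max(L^K, 1) h δ`. Since `1 + h α ≤ e^(h α)` and `K h = T`, this is
at most `max(e^(α T), 1) T δ`.
-/

open scoped ENNReal

theorem norm_iterate_sub_iterate_le_geom_sum {E : Type*} [SeminormedAddCommGroup E]
    {F G : E → E} {L ε : ℝ} (hL : 0 ≤ L) (hF : ∀ x y, ‖F x - F y‖ ≤ L * ‖x - y‖)
    (hFG : ∀ x, ‖F x - G x‖ ≤ ε) (x : E) (k : ℕ) :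
    ‖F^[k] x - G^[k] x‖ ≤ (∑ i ∈ Finset.range k, L ^ i) * ε := by
  induction k with
  | zero => simp
  | succ k ih =>
    rw [Function.iterate_succ_apply', Function.iterate_succ_apply']
    calc ‖F (F^[k] x) - G (G^[k] x)‖
        ≤ ‖F (F^[k] x) - F (G^[k] x)‖ + ‖F (G^[k] x) - G (G^[k] x)‖ :=
          norm_sub_le_norm_sub_add_norm_sub _ _ _
      _ ≤ L * ‖F^[k] x - G^[k] x‖ + ε := add_le_add (hF _ _) (hFG _)
      _ ≤ L * ((∑ i ∈ Finset.range k, L ^ i) * ε) + ε := by gcongr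
      _ = (∑ i ∈ Finset.range (k + 1), L ^ i) * ε := by
          rw [geom_sum_succ]; ring

theorem pow_le_max_pow_one {L : ℝ} (hL : 0 ≤ L) {i n : ℕ} (hi : i ≤ n) :
    L ^ i ≤ max (L ^ n) 1 := by
  rcases le_total L 1 with hL1 | hL1
  · exact (pow_le_one₀ hL hL1).trans (le_max_right _ _)
  · exact (pow_le_pow_right₀ hL1 hi).trans (le_max_left _ _)

theorem geom_sum_le_mul_max_pow_one {L : ℝ} (hL : 0 ≤ L) (n : ℕ) :
    ∑ i ∈ Finset.range n, L ^ i ≤ n * max (L ^ n) 1 := by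
  simpa using Finset.sum_le_card_nsmul _ _ _
    fun i hi => pow_le_max_pow_one hL (Finset.mem_range.mp hi).le

theorem one_add_pow_le_exp_mul {a : ℝ} (ha : 0 ≤ 1 + a) (n : ℕ) :
    (1 + a) ^ n ≤ Real.exp (n * a) := by
  rw [Real.exp_nat_mul]
  exact pow_le_pow_left₀ ha ((add_comm 1 a).trans_le (Real.add_one_le_exp a)) n

theorem statement9_general (d : ℕ) (p : ℝ≥0∞) [Fact (1 ≤ p)]
    (f f' : PiLp p (fun _ : Fin d => ℝ) → PiLp p (fun _ : Fin d => ℝ))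
    (δ : ℝ) (hfe : ∀ x, ‖f x - f' x‖ ≤ δ)
    (T : ℝ) (hT : 0 < T) (K : ℕ) (hK : 1 ≤ K) (h : ℝ) (hh : h = T / K)
    (α : ℝ) (hα : 0 ≤ 1 + h * α)
    (hLip : ∀ x y, ‖(x + h • f x) - (y + h • f y)‖ ≤ (1 + h * α) * ‖x - y‖)
    (x : PiLp p (fun _ : Fin d => ℝ)) :
    ‖(fun z => z + h • f z)^[K] x - (fun z => z + h • f' z)^[K] x‖ ≤
      max (Real.exp (α * T)) 1 * T * δ := by
  have hKh : K * h = T := by rw [hh]; field_simp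
  have hh0 : 0 ≤ h := by rw [hh]; positivity
  have hδ : 0 ≤ δ := (norm_nonneg _).trans (hfe 0)
  have hstep : ∀ z, ‖(z + h • f z) - (z + h • f' z)‖ ≤ h * δ := fun z => by
    rw [add_sub_add_left_eq_sub, ← smul_sub, norm_smul, Real.norm_of_nonneg hh0]
    exact mul_le_mul_of_nonneg_left (hfe z) hh0
  have hpow : (1 + h * α) ^ K ≤ Real.exp (α * T) :=
    (one_add_pow_le_exp_mul hα K).trans_eq (by rw [← hKh]; ring_nf)
  calc _ ≤ (∑ i ∈ Finset.range K, (1 + h * α) ^ i) * (h * δ) :=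
        norm_iterate_sub_iterate_le_geom_sum hα hLip hstep x K
    _ ≤ K * max (Real.exp (α * T)) 1 * (h * δ) := by
        gcongr
        exact (geom_sum_le_mul_max_pow_one hα K).trans (by gcongr)
    _ = max (Real.exp (α * T)) 1 * T * δ := by rw [← hKh]; ring

theorem statement9 (d : ℕ) (p : ℝ≥0∞) [Fact (1 ≤ p)]
    (f f' : PiLp p (fun _ : Fin d => ℝ) → PiLp p (fun _ : Fin d => ℝ))
    (δ : ℝ) (hδ : 0 < δ) (hfe : ∀ x, ‖f x - f' x‖ ≤ δ)
    (T : ℝ) (hT : 0 < T) (K : ℕ) (hK : 1 ≤ K) (h : ℝ) (hh : h = T / K)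
    (α : ℝ) (hα : 0 ≤ 1 + h * α)
    (hLip : ∀ x y, ‖(x + h • f x) - (y + h • f y)‖ ≤ (1 + h * α) * ‖x - y‖)
    (x : PiLp p (fun _ : Fin d => ℝ)) :
    ‖(fun z => z + h • f z)^[K] x - (fun z => z + h • f' z)^[K] x‖ ≤
      max (Real.exp (α * T)) 1 * T * δ :=
  statement9_general d p f f' δ hfe T hT K hK h hh α hα hLip x
end

section
/- Let 1 ≤ p ≤ ∞ and let f : ℝ^d → ℝ^d be a C¹ function such that ‖f(x)‖_p ≤ A and the operator p-norm of the Jacobian satisfies ‖Df(x)‖_p ≤ B for all x ∈ ℝ^d, for some constants A, B > 0. Let T > 0, let K ≥ 1 be an integer, and set h = T/K. Let f̃ : ℝ^d → ℝ^d satisfy ‖f(x) − f̃(x)‖_p ≤ δ for all x ∈ ℝ^d, for some δ > 0, and define the perturbed Euler map Ẽ(x) = x + h f̃(x). Let α ∈ ℝ be such that 1 + hα ≥ 0 and the Euler map E(x) = x + h f(x) is Lipschitz with constant 1 + hα with respect to the p-norm. For x₀ ∈ ℝ^d let φ : [0, T] → ℝ^d be the solution of the ODE φ'(t) = f(φ(t))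 with φ(0) = x₀. Then ‖φ(T) − Ẽ^K(x₀)‖_p ≤ max{e^{αT}, 1} · T · δ + A e^{BT} · T / K. -/
/-!
The exact solution sampled at `t_k = k h` satisfies `φ(t_{k+1}) = E(φ(t_k))` up to a local
error `A B h²`, and `E` differs from the perturbed map `Ẽ` by at most `h δ`. Since `E` is
Lipschitz with constant `L = min (1 + h α) (1 + h B)`, these errors accumulate to at most
`(∑_{j<K} L^j) (A B h² + h δ)`. Bounding `L` by `1 + h α` in the `δ`-term and by `1 + h B` in the
other one and summing the geometric series gives the two terms of the bound.
-/

open scoped ENNReal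

open Finset

lemma norm_sub_iterate_le_geom_sum_mul {E : Type*} [SeminormedAddCommGroup E] {y : ℕ → E}
    {Φ Ψ : E → E} {L τ η : ℝ} (hL : 0 ≤ L) (hΦ : ∀ x z, ‖Φ x - Φ z‖ ≤ L * ‖x - z‖)
    (hΨ : ∀ x, ‖Φ x - Ψ x‖ ≤ η) {n : ℕ}
    (hy : ∀ k < n, ‖y (k + 1) - Φ (y k)‖ ≤ τ) :
    ‖y n - Ψ^[n] (y 0)‖ ≤ (∑ j ∈ range n, L ^ j) * (τ + η) := by
  induction n with
  | zero => simp
  | succ n ih =>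
    rw [Function.iterate_succ_apply']
    generalize Ψ^[n] (y 0) = z at ih
    calc ‖y (n + 1) - Ψ z‖
        = ‖(y (n + 1) - Φ (y n)) + (Φ (y n) - Φ z) + (Φ z - Ψ z)‖ := by abel_nf
      _ ≤ τ + L * ((∑ j ∈ range n, L ^ j) * (τ + η)) + η := by
          grw [norm_add₃_le, hy n n.lt_succ_self, hΦ, ih fun k hk => hy k (by omega), hΨ]
      _ = (∑ j ∈ range (n + 1), L ^ j) * (τ + η) := by rw [geom_sum_succ]; ring

section

variable {E : Type*} [NormedAddCommGroup E] [NormedSpace ℝ E]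

def eulerStep (f : E → E) (h : ℝ) (x : E) : E := x + h • f x

lemma norm_eulerStep_sub_eulerStep (f g : E → E) {h : ℝ} (hh : 0 ≤ h) (x : E) :
    ‖eulerStep f h x - eulerStep g h x‖ = h * ‖f x - g x‖ := by
  rw [eulerStep, eulerStep, add_sub_add_left_eq_sub, ← smul_sub, norm_smul,
    Real.norm_of_nonneg hh]

lemma norm_eulerStep_sub_eulerStep_le {f : E → E} {B h : ℝ} (hf : ∀ x y, ‖f x - f y‖ ≤ B * ‖x - y‖)
    (hh : 0 ≤ h) (x y : E) :
    ‖eulerStep f h x - eulerStep f h y‖ ≤ (1 + h * B) * ‖x - y‖ := calc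
  ‖eulerStep f h x - eulerStep f h y‖ = ‖(x - y) + h • (f x - f y)‖ := by
    rw [eulerStep, eulerStep, smul_sub]; abel_nf
  _ ≤ ‖x - y‖ + h * (B * ‖x - y‖) := by
    grw [norm_add_le, norm_smul, Real.norm_of_nonneg hh, hf]
  _ = (1 + h * B) * ‖x - y‖ := by ring

lemma norm_sub_eulerStep_le_of_hasDerivAt {f : E → E} {φ : ℝ → E} {A B a h : ℝ} (hh : 0 ≤ h)
    (hB : 0 ≤ B) (hfA : ∀ x, ‖f x‖ ≤ A) (hfB : ∀ x y, ‖f x - f y‖ ≤ B * ‖x - y‖)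
    (hφ : ∀ t ∈ Set.Icc a (a + h), HasDerivAt φ (f (φ t)) t) :
    ‖φ (a + h) - eulerStep f h (φ a)‖ ≤ A * B * h ^ 2 := by
  have hA : 0 ≤ A := (norm_nonneg _).trans (hfA 0)
  have hφ_lip : ∀ t ∈ Set.Icc a (a + h), ‖φ t - φ a‖ ≤ A * (t - a) :=
    norm_image_sub_le_of_norm_deriv_le_segment' (fun t ht => (hφ t ht).hasDerivWithinAt)
      fun t _ => hfA _
  have hderiv : ∀ t ∈ Set.Icc a (a + h), HasDerivWithinAt (fun s => φ s - s • f (φ a))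
      (f (φ t) - f (φ a)) (Set.Icc a (a + h)) t := fun t ht =>
    ((hφ t ht).sub ((hasDerivAt_id t).smul_const (f (φ a)))).hasDerivWithinAt.congr_deriv
      (by simp)
  have hderiv_le : ∀ t ∈ Set.Ico a (a + h), ‖f (φ t) - f (φ a)‖ ≤ A * B * h := fun t ht => by
    grw [hfB, hφ_lip t (Set.Ico_subset_Icc_self ht), ht.2.le]
    linarith
  calc ‖φ (a + h) - eulerStep f h (φ a)‖
      = ‖φ (a + h) - (a + h) • f (φ a) - (φ a - a • f (φ a))‖ := by
        rw [eulerStep, add_smul]; abel_nf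
    _ ≤ A * B * h * (a + h - a) :=
        norm_image_sub_le_of_norm_deriv_le_segment' hderiv hderiv_le _ ⟨by linarith, le_rfl⟩
    _ = A * B * h ^ 2 := by ring

lemma norm_sub_iterate_eulerStep_le {f g : E → E} {φ : ℝ → E} {A B L δ h : ℝ} {n : ℕ}
    (hh : 0 ≤ h) (hB : 0 ≤ B) (hL : 0 ≤ L) (hfA : ∀ x, ‖f x‖ ≤ A)
    (hfB : ∀ x y, ‖f x - f y‖ ≤ B * ‖x - y‖)
    (hE : ∀ x y, ‖eulerStep f h x - eulerStep f h y‖ ≤ L * ‖x - y‖)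
    (hfg : ∀ x, ‖f x - g x‖ ≤ δ) (hφ : ∀ t ∈ Set.Icc 0 (n * h), HasDerivAt φ (f (φ t)) t) :
    ‖φ (n * h) - (eulerStep g h)^[n] (φ 0)‖ ≤
      (∑ j ∈ range n, L ^ j) * (A * B * h ^ 2 + h * δ) := by
  have htrunc : ∀ k < n, ‖φ ((k + 1 : ℕ) * h) - eulerStep f h (φ (k * h))‖ ≤ A * B * h ^ 2 := by
    intro k hk
    have hk' : (k + 1 : ℝ) ≤ n := by exact_mod_cast hk
    rw [Nat.cast_succ, add_one_mul]
    refine norm_sub_eulerStep_le_of_hasDerivAt hh hB hfA hfB fun t ht => hφ t ⟨?_, ?_⟩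
    · nlinarith [ht.1]
    · nlinarith [ht.2]
  have hpert : ∀ x, ‖eulerStep f h x - eulerStep g h x‖ ≤ h * δ := fun x => by
    rw [norm_eulerStep_sub_eulerStep f g hh]
    gcongr
    exact hfg x
  simpa using norm_sub_iterate_le_geom_sum_mul (y := fun k => φ (k * h)) hL hE hpert htrunc

end

lemma one_add_pow_le_exp {a : ℝ} (ha : 0 ≤ 1 + a) (n : ℕ) : (1 + a) ^ n ≤ Real.exp (a * n) := by
  rw [mul_comm, Real.exp_nat_mul]
  exact pow_le_pow_left₀ ha (by linarith [Real.add_one_le_exp a]) n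

lemma geom_sum_one_add_le {a : ℝ} (ha : 0 ≤ 1 + a) (n : ℕ) :
    ∑ j ∈ range n, (1 + a) ^ j ≤ n * max (Real.exp (a * n)) 1 := by
  have hterm : ∀ j ∈ range n, (1 + a) ^ j ≤ max (Real.exp (a * n)) 1 := by
    intro j hj
    rcases le_total (1 + a) 1 with hle | hge
    · exact (pow_le_one₀ ha hle).trans (le_max_right _ _)
    · calc (1 + a) ^ j ≤ (1 + a) ^ n := pow_le_pow_right₀ hge (mem_range.mp hj).le
        _ ≤ _ := (one_add_pow_le_exp ha n).trans (le_max_left _ _)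
  simpa using sum_le_sum hterm

lemma geom_sum_one_add_mul_le {a : ℝ} (ha : 0 ≤ a) (n : ℕ) :
    (∑ j ∈ range n, (1 + a) ^ j) * a ≤ Real.exp (a * n) := by
  have := geom_sum_mul (1 + a) n
  rw [add_sub_cancel_left] at this
  linarith [one_add_pow_le_exp (by linarith : 0 ≤ 1 + a) n]

lemma geom_sum_min_mul_le {a b c e : ℝ} (ha : 0 ≤ 1 + a) (hb : 0 ≤ b) (hc : 0 ≤ c) (he : 0 ≤ e)
    (n : ℕ) :
    (∑ j ∈ range n, min (1 + a) (1 + b) ^ j) * (b * c + e) ≤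
      n * max (Real.exp (a * n)) 1 * e + Real.exp (b * n) * c := calc
  (∑ j ∈ range n, min (1 + a) (1 + b) ^ j) * (b * c + e)
      = (∑ j ∈ range n, min (1 + a) (1 + b) ^ j) * e
        + (∑ j ∈ range n, min (1 + a) (1 + b) ^ j) * b * c := by ring
  _ ≤ (∑ j ∈ range n, (1 + a) ^ j) * e + (∑ j ∈ range n, (1 + b) ^ j) * b * c := by
    have hmin : 0 ≤ min (1 + a) (1 + b) := le_min ha (by linarith)
    gcongr with j _ j _
    · exact min_le_left _ _
    · exact min_le_right _ _
  _ ≤ n * max (Real.exp (a * n)) 1 * e + Real.exp (b * n) * c := by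
    gcongr
    · exact geom_sum_one_add_le ha n
    · exact geom_sum_one_add_mul_le hb n

theorem statement10_general (d : ℕ) (p : ℝ≥0∞) [Fact (1 ≤ p)]
    (f : PiLp p (fun _ : Fin d => ℝ) → PiLp p (fun _ : Fin d => ℝ))
    (hf : ContDiff ℝ 1 f)
    (A B : ℝ)
    (hfA : ∀ x, ‖f x‖ ≤ A) (hfB : ∀ x, ‖fderiv ℝ f x‖ ≤ B)
    (T : ℝ) (hT : 0 < T) (K : ℕ) (hK : 1 ≤ K) (h : ℝ) (hh : h = T / K)
    (f' : PiLp p (fun _ : Fin d => ℝ) → PiLp p (fun _ : Fin d => ℝ))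
    (δ : ℝ) (hfe : ∀ x, ‖f x - f' x‖ ≤ δ)
    (α : ℝ) (hα : 0 ≤ 1 + h * α)
    (hLip : ∀ x y, ‖(x + h • f x) - (y + h • f y)‖ ≤ (1 + h * α) * ‖x - y‖)
    (x₀ : PiLp p (fun _ : Fin d => ℝ)) (φ : ℝ → PiLp p (fun _ : Fin d => ℝ))
    (hφ0 : φ 0 = x₀)
    (hφ : ∀ t ∈ Set.Icc (0 : ℝ) T, HasDerivAt φ (f (φ t)) t) :
    ‖φ T - (fun z => z + h • f' z)^[K] x₀‖ ≤
      max (Real.exp (α * T)) 1 * T * δ + A * Real.exp (B * T) * T / K := by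
  have hA : 0 ≤ A := (norm_nonneg _).trans (hfA x₀)
  have hB : 0 ≤ B := (norm_nonneg _).trans (hfB x₀)
  have hδ : 0 ≤ δ := (norm_nonneg _).trans (hfe x₀)
  have hKh : K * h = T := by rw [hh]; field_simp
  have h0 : 0 ≤ h := by rw [hh]; positivity
  have hfLip : ∀ x y, ‖f x - f y‖ ≤ B * ‖x - y‖ := fun x y =>
    convex_univ.norm_image_sub_le_of_norm_fderiv_le
      (fun z _ => (hf.differentiable one_ne_zero).differentiableAt) (fun z _ => hfB z)
      trivial trivial
  have hEuler : ∀ x y, ‖eulerStep f h x - eulerStep f h y‖ ≤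
      min (1 + h * α) (1 + h * B) * ‖x - y‖ := fun x y => by
    rw [min_mul_of_nonneg _ _ (norm_nonneg _)]
    exact le_min (hLip x y) (norm_eulerStep_sub_eulerStep_le hfLip h0 x y)
  have herror := norm_sub_iterate_eulerStep_le h0 hB (le_min hα (by positivity)) hfA hfLip hEuler
    hfe (φ := φ) (n := K) (by rwa [hKh])
  rw [hKh, hφ0] at herror
  calc ‖φ T - (fun z => z + h • f' z)^[K] x₀‖
      ≤ (∑ j ∈ range K, min (1 + h * α) (1 + h * B) ^ j) * (h * B * (A * h) + h * δ) :=
        herror.trans_eq (by ring)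
    _ ≤ K * max (Real.exp (h * α * K)) 1 * (h * δ) + Real.exp (h * B * K) * (A * h) :=
        geom_sum_min_mul_le hα (by positivity) (by positivity) (by positivity) K
    _ = max (Real.exp (α * T)) 1 * T * δ + A * Real.exp (B * T) * T / K := by
      rw [← hKh]; field_simp

theorem statement10 (d : ℕ) (p : ℝ≥0∞) [Fact (1 ≤ p)]
    (f : PiLp p (fun _ : Fin d => ℝ) → PiLp p (fun _ : Fin d => ℝ))
    (hf : ContDiff ℝ 1 f)
    (A B : ℝ) (hA : 0 < A) (hB : 0 < B)
    (hfA : ∀ x, ‖f x‖ ≤ A) (hfB : ∀ x, ‖fderiv ℝ f x‖ ≤ B)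
    (T : ℝ) (hT : 0 < T) (K : ℕ) (hK : 1 ≤ K) (h : ℝ) (hh : h = T / K)
    (f' : PiLp p (fun _ : Fin d => ℝ) → PiLp p (fun _ : Fin d => ℝ))
    (δ : ℝ) (hδ : 0 < δ) (hfe : ∀ x, ‖f x - f' x‖ ≤ δ)
    (α : ℝ) (hα : 0 ≤ 1 + h * α)
    (hLip : ∀ x y, ‖(x + h • f x) - (y + h • f y)‖ ≤ (1 + h * α) * ‖x - y‖)
    (x₀ : PiLp p (fun _ : Fin d => ℝ)) (φ : ℝ → PiLp p (fun _ : Fin d => ℝ))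
    (hφ0 : φ 0 = x₀)
    (hφ : ∀ t ∈ Set.Icc (0 : ℝ) T, HasDerivAt φ (f (φ t)) t) :
    ‖φ T - (fun z => z + h • f' z)^[K] x₀‖ ≤
      max (Real.exp (α * T)) 1 * T * δ + A * Real.exp (B * T) * T / K :=
  statement10_general d p f hf A B hfA hfB T hT K hK h hh f' δ hfe α hα hLip x₀ φ hφ0 hφ
end

section
/- Let D ⊂ ℝ^d, and let V : D × ℝ^q → ℝ be such that for every x ∈ D the function u ↦ V(x, u) is C² with all eigenvalues of its Hessian ∂²V/∂u²(x, u) lying in [λ_min, λ_max] with 0 < λ_min ≤ λ_max, and with ∂²V/∂u_j²(x, u) ≤ C₁ for all j = 1, …, q, all u ∈ ℝ^q, and some constant C₁ > 0. For each x ∈ D let u*(x) denote the unique minimizer of u ↦ V(x, u), and let u₀ ∈ ℝ^q and γ > 0 satisfy ‖u₀ − u*(x)‖_2 ≤ γ for all x ∈ D. Let Ṽ : D × ℝ^q → ℝ satisfy |V(x, u) − Ṽ(x, u)| ≤ e₁ for all (x, u) ∈ D × ℝ^q, for some e₁ > 0. Let h > 0, set β = 1 / max{1, 2λ_max} and L =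 1 − β λ_min, and define ψ̃ : D × ℝ^q → ℝ^q componentwise by ψ̃(x, u)_j = u_j − (β/h)(Ṽ(x, u + h e_j) − Ṽ(x, u)), where e_j is the j-th standard basis vector of ℝ^q. Then for every x ∈ D and every integer K ≥ 1, ‖(ψ̃(x, ·))^K(u₀) − u*(x)‖_2 ≤ γ L^K + C₁ √q K h + 2 √q K h^{−1} e₁, where (ψ̃(x, ·))^K denotes the K-fold self-composition of the map u ↦ ψ̃(x, u). -/
/-!
Since `β λ_max ≤ 1/2`, the derivative `I - β ∇²V(x, u)` of the exact gradient step
`F u = u - β ∇V(x, u)` is symmetric with quadratic form between `0` and `L‖v‖²`, so `F` is an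
`L`-contraction fixing the critical point `u*(x)`. Coordinatewise, `ψ̃(x, ·) - F` is `-β` times the
error of a forward difference of `Ṽ`, which is at most `C₁ h` (second-order Taylor) plus
`2 e₁ / h` (noise); an `L`-contraction perturbed by `ε` at each step stays within `L^K γ + K ε`
of its fixed point.
-/

open scoped RealInnerProductSpace Gradient
open InnerProductSpace Set

theorem ContinuousLinearMap.norm_le_of_isSymmetric {E : Type*} [NormedAddCommGroup E]
    [InnerProductSpace ℝ E] {T : E →L[ℝ] E}
    (hT : (T : E →ₗ[ℝ] E).IsSymmetric) {c : ℝ} (hc : 0 ≤ c)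
    (hTc : ∀ x, |⟪T x, x⟫| ≤ c * ‖x‖ ^ 2) : ‖T‖ ≤ c := by
  rw [T.norm_eq_iSup_rayleighQuotient hT]
  refine ciSup_le fun x => ?_
  rcases eq_or_ne x 0 with rfl | hx
  · simpa using hc
  · rw [rayleighQuotient, reApplyInnerSelf_apply, RCLike.re_to_real, abs_div, abs_sq,
      div_le_iff₀ (by positivity)]
    exact hTc x

theorem abs_sub_sub_mul_deriv_le {g g' g'' : ℝ → ℝ} {C h : ℝ}
    (hg : ∀ t, HasDerivAt g (g' t) t) (hg' : ∀ t, HasDerivAt g' (g'' t) t)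
    (hC : ∀ t, |g'' t| ≤ C) (hh : 0 ≤ h) : |g h - g 0 - h * g' 0| ≤ C * h ^ 2 := by
  have hC0 : 0 ≤ C := (abs_nonneg _).trans (hC 0)
  have hg'_lip : ∀ t ∈ Icc 0 h, ‖g' t - g' 0‖ ≤ C * (t - 0) :=
    norm_image_sub_le_of_norm_deriv_le_segment' (fun t _ => (hg' t).hasDerivWithinAt)
      fun t _ => hC t
  have key := norm_image_sub_le_of_norm_deriv_le_segment' (f := fun t => g t - t * g' 0)
    (C := C * h)
    (fun t _ => ((hg t).sub (hasDerivAt_mul_const (g' 0))).hasDerivWithinAt)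
    (fun t ht => (hg'_lip t (Ico_subset_Icc_self ht)).trans (by nlinarith [ht.1, ht.2]))
    h (right_mem_Icc.2 hh)
  simp only [Real.norm_eq_abs, zero_mul, sub_zero] at key
  calc |g h - g 0 - h * g' 0| = |g h - h * g' 0 - g 0| := by ring_nf
    _ ≤ C * h * h := key
    _ = C * h ^ 2 := by ring

section

variable {E : Type*} [NormedAddCommGroup E] [NormedSpace ℝ E]

theorem abs_sub_sub_mul_fderiv_le {f : E → ℝ} (hf : ContDiff ℝ 2 f) {C h : ℝ} {u w : E}
    (hC : ∀ y, |fderiv ℝ (fderiv ℝ f) y w w| ≤ C) (hh : 0 ≤ h) :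
    |f (u + h • w) - f u - h * fderiv ℝ f u w| ≤ C * h ^ 2 := by
  have hf' : Differentiable ℝ (fderiv ℝ f) :=
    (hf.fderiv_right (m := 1) (by norm_num)).differentiable (by norm_num)
  have hline : ∀ t : ℝ, HasDerivAt (fun s : ℝ => u + s • w) w t := fun t => by
    simpa using ((hasDerivAt_id t).smul_const w).const_add u
  have key := abs_sub_sub_mul_deriv_le (g := fun t => f (u + t • w))
    (g' := fun t => fderiv ℝ f (u + t • w) w)
    (g'' := fun t => fderiv ℝ (fderiv ℝ f) (u + t • w) w w)
    (fun t => ((hf.differentiable (by norm_num) _).hasFDerivAt.comp_hasDerivAt t (hline t)))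
    (fun t => by
      simpa using
        ((hf' _).hasFDerivAt.comp_hasDerivAt t (hline t)).clm_apply (hasDerivAt_const t w))
    (fun t => hC _) hh
  simpa using key

theorem abs_div_sub_fderiv_le_of_abs_sub_le {f g : E → ℝ} (hf : ContDiff ℝ 2 f) {C ε h : ℝ}
    {u w : E} (hC : ∀ y, |fderiv ℝ (fderiv ℝ f) y w w| ≤ C) (hfg : ∀ y, |f y - g y| ≤ ε)
    (hh : 0 < h) :
    |(g (u + h • w) - g u) / h - fderiv ℝ f u w| ≤ C * h + 2 * h⁻¹ * ε := by
  have hTaylor := abs_sub_sub_mul_fderiv_le hf hC (u := u) hh.le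
  have h1 := hfg (u + h • w)
  have h2 := hfg u
  have hsplit : (g (u + h • w) - g u) / h - fderiv ℝ f u w =
      h⁻¹ * ((f (u + h • w) - f u - h * fderiv ℝ f u w) - (f (u + h • w) - g (u + h • w))
        + (f u - g u)) := by
    field_simp
    ring
  rw [hsplit, abs_mul, abs_inv, abs_of_pos hh]
  calc h⁻¹ * |(f (u + h • w) - f u - h * fderiv ℝ f u w) - (f (u + h • w) - g (u + h • w))
        + (f u - g u)| ≤ h⁻¹ * (C * h ^ 2 + ε + ε) := by
        gcongr
        exact (abs_add_le _ _).trans (add_le_add ((abs_sub _ _).trans (add_le_add hTaylor h1)) h2)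
    _ = C * h + 2 * h⁻¹ * ε := by field_simp; ring

end

section

variable {E : Type*} [NormedAddCommGroup E] [InnerProductSpace ℝ E] [CompleteSpace E]

theorem hasFDerivAt_gradient {f : E → ℝ} {u : E} (hf : DifferentiableAt ℝ (fderiv ℝ f) u) :
    HasFDerivAt (∇ f)
      ((toDual ℝ E).symm.toContinuousLinearEquiv.toContinuousLinearMap.comp
        (fderiv ℝ (fderiv ℝ f) u)) u :=
  (toDual ℝ E).symm.toContinuousLinearEquiv.toContinuousLinearMap.hasFDerivAt.comp u hf.hasFDerivAt

theorem norm_gradientStep_sub_le {f : E → ℝ} (hf : ContDiff ℝ 2 f) {m M β : ℝ}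
    (hHess : ∀ u v, m * ‖v‖ ^ 2 ≤ fderiv ℝ (fderiv ℝ f) u v v ∧
      fderiv ℝ (fderiv ℝ f) u v v ≤ M * ‖v‖ ^ 2)
    (hmM : m ≤ M) (hβ : 0 ≤ β) (hβM : β * M ≤ 1) (a b : E) :
    ‖(a - β • ∇ f a) - (b - β • ∇ f b)‖ ≤ (1 - β * m) * ‖a - b‖ := by
  have hf' : Differentiable ℝ (fderiv ℝ f) :=
    (hf.fderiv_right (m := 1) (by norm_num)).differentiable (by norm_num)
  set J : StrongDual ℝ E →L[ℝ] E := (toDual ℝ E).symm.toContinuousLinearEquiv.toContinuousLinearMap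
  set A : E → E →L[ℝ] E := fun u =>
    ContinuousLinearMap.id ℝ E - β • J.comp (fderiv ℝ (fderiv ℝ f) u)
  have hA : ∀ u, HasFDerivAt (fun u => u - β • ∇ f u) (A u) u := fun u =>
    (hasFDerivAt_id u).sub ((hasFDerivAt_gradient (hf' u)).const_smul β)
  have hA_inner : ∀ u v w, ⟪A u v, w⟫ = ⟪v, w⟫ - β * fderiv ℝ (fderiv ℝ f) u v w := fun u v w => by
    simp [A, J, inner_sub_left, real_inner_smul_left, toDual_symm_apply]
  have hA_norm : ∀ u, ‖A u‖ ≤ 1 - β * m := fun u => by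
    have hsymm := (hf.contDiffAt (x := u)).isSymmSndFDerivAt (by simp)
    refine ContinuousLinearMap.norm_le_of_isSymmetric (fun v w => ?_) (by nlinarith) fun v => ?_
    · simp only [ContinuousLinearMap.coe_coe]
      rw [real_inner_comm (A u w), hA_inner, hA_inner, hsymm v w, real_inner_comm]
    · rw [hA_inner, real_inner_self_eq_norm_sq, abs_le]
      obtain ⟨h1, h2⟩ := hHess u v
      constructor <;> nlinarith [mul_le_mul_of_nonneg_left h1 hβ, mul_le_mul_of_nonneg_left h2 hβ]
  exact convex_univ.norm_image_sub_le_of_norm_hasFDerivWithin_le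
    (fun u _ => (hA u).hasFDerivWithinAt) (fun u _ => hA_norm u) (mem_univ b) (mem_univ a)

theorem dist_gradientStep_le_of_forall_le {f : E → ℝ} (hf : ContDiff ℝ 2 f) {m M β : ℝ}
    (hHess : ∀ u v, m * ‖v‖ ^ 2 ≤ fderiv ℝ (fderiv ℝ f) u v v ∧
      fderiv ℝ (fderiv ℝ f) u v v ≤ M * ‖v‖ ^ 2)
    (hmM : m ≤ M) (hβ : 0 ≤ β) (hβM : β * M ≤ 1) {p : E} (hp : ∀ u, f p ≤ f u) (u : E) :
    dist (u - β • ∇ f u) p ≤ (1 - β * m) * dist u p := by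
  have hcrit : ∇ f p = 0 := by
    simp [gradient, IsLocalMin.fderiv_eq_zero (Filter.Eventually.of_forall hp)]
  simpa [hcrit, dist_eq_norm] using norm_gradientStep_sub_le hf hHess hmM hβ hβM u p

end

theorem dist_iterate_le_of_perturbed_contraction {X : Type*} [PseudoMetricSpace X]
    {F G : X → X} {p : X} {L ε : ℝ} (hF : ∀ x, dist (F x) p ≤ L * dist x p)
    (hL0 : 0 ≤ L) (hL1 : L ≤ 1)
    (hGF : ∀ x, dist (G x) (F x) ≤ ε) (x : X) (n : ℕ) :
    dist (G^[n] x) p ≤ L ^ n * dist x p + n * ε := by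
  have hε : 0 ≤ ε := dist_nonneg.trans (hGF x)
  induction n with
  | zero => simp
  | succ n ih =>
    rw [Function.iterate_succ_apply']
    calc dist (G (G^[n] x)) p
        ≤ dist (G (G^[n] x)) (F (G^[n] x)) + dist (F (G^[n] x)) p := dist_triangle _ _ _
      _ ≤ ε + L * (L ^ n * dist x p + n * ε) :=
        add_le_add (hGF _) ((hF _).trans (mul_le_mul_of_nonneg_left ih hL0))
      _ ≤ L ^ (n + 1) * dist x p + (n + 1 : ℕ) * ε := by
        push_cast
        rw [pow_succ]
        nlinarith [mul_nonneg (sub_nonneg.2 hL1) (mul_nonneg n.cast_nonneg hε)]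

namespace EuclideanSpace

variable {ι : Type*} [Fintype ι]

theorem norm_le_sqrt_card_mul {v : EuclideanSpace ℝ ι} {c : ℝ} (hv : ∀ i, |v i| ≤ c) :
    ‖v‖ ≤ √(Fintype.card ι) * c := by
  cases isEmpty_or_nonempty ι
  · simp [Subsingleton.elim v 0]
  · have hc : 0 ≤ c := (abs_nonneg _).trans (hv (Classical.arbitrary ι))
    rw [norm_eq, ← Real.sqrt_sq hc, ← Real.sqrt_mul (Nat.cast_nonneg _)]
    gcongr
    calc ∑ i, ‖v i‖ ^ 2 ≤ ∑ _i : ι, c ^ 2 :=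
          Finset.sum_le_sum fun i _ => pow_le_pow_left₀ (norm_nonneg _) (hv i) 2
      _ = Fintype.card ι * c ^ 2 := by simp

theorem gradient_apply [DecidableEq ι] (f : EuclideanSpace ℝ ι → ℝ) (u : EuclideanSpace ℝ ι)
    (i : ι) : ∇ f u i = fderiv ℝ f u (single i 1) := by
  rw [← inner_gradient_left, inner_single_right]
  simp

theorem dist_forwardDifferenceStep_gradientStep_le [DecidableEq ι] {f g : EuclideanSpace ℝ ι → ℝ}
    (hf : ContDiff ℝ 2 f) {C ε h β : ℝ}
    (hC : ∀ y i, |fderiv ℝ (fderiv ℝ f) y (single i 1) (single i 1)| ≤ C)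
    (hfg : ∀ y, |f y - g y| ≤ ε) (hh : 0 < h) (hβ0 : 0 ≤ β) (hβ1 : β ≤ 1)
    {u v : EuclideanSpace ℝ ι} (hv : ∀ i, v i = u i - β / h * (g (u + h • single i 1) - g u)) :
    dist v (u - β • ∇ f u) ≤ √(Fintype.card ι) * (C * h + 2 * h⁻¹ * ε) := by
  rw [dist_eq_norm]
  refine norm_le_sqrt_card_mul fun i => ?_
  have hfd := abs_div_sub_fderiv_le_of_abs_sub_le (u := u) hf (hC · i) hfg hh
  rw [PiLp.sub_apply, PiLp.sub_apply, PiLp.smul_apply, hv, gradient_apply]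
  calc |u i - β / h * (g (u + h • single i 1) - g u) - (u i - β • fderiv ℝ f u (single i 1))|
      = β * |(g (u + h • single i 1) - g u) / h - fderiv ℝ f u (single i 1)| := by
        rw [← abs_of_nonneg hβ0, ← abs_mul, abs_of_nonneg hβ0, smul_eq_mul, ← abs_neg]
        congr 1
        ring
    _ ≤ β * (C * h + 2 * h⁻¹ * ε) := by gcongr
    _ ≤ C * h + 2 * h⁻¹ * ε := mul_le_of_le_one_left ((abs_nonneg _).trans hfd) hβ1

end EuclideanSpace

theorem statement13_general (d q : ℕ) (D : Set (Fin d → ℝ))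
    (V Vt : (Fin d → ℝ) → EuclideanSpace ℝ (Fin q) → ℝ)
    (hV : ∀ x ∈ D, ContDiff ℝ 2 (V x))
    (lmin lmax : ℝ) (hl : 0 < lmin) (hle : lmin ≤ lmax)
    (hHess : ∀ x ∈ D, ∀ u v : EuclideanSpace ℝ (Fin q),
      lmin * ‖v‖ ^ 2 ≤ iteratedFDeriv ℝ 2 (V x) u ![v, v] ∧
        iteratedFDeriv ℝ 2 (V x) u ![v, v] ≤ lmax * ‖v‖ ^ 2)
    (C₁ : ℝ) (hC₁ : 0 < C₁)
    (hdiag : ∀ x ∈ D, ∀ (u : EuclideanSpace ℝ (Fin q)) (j : Fin q),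
      iteratedFDeriv ℝ 2 (V x) u
        ![EuclideanSpace.single j 1, EuclideanSpace.single j 1] ≤ C₁)
    (ustar : (Fin d → ℝ) → EuclideanSpace ℝ (Fin q))
    (hustar : ∀ x ∈ D, ∀ u, V x (ustar x) ≤ V x u)
    (u₀ : EuclideanSpace ℝ (Fin q)) (γ : ℝ)
    (hu₀ : ∀ x ∈ D, ‖u₀ - ustar x‖ ≤ γ)
    (e₁ : ℝ)
    (hVt : ∀ x ∈ D, ∀ u, |V x u - Vt x u| ≤ e₁)
    (h : ℝ) (hh : 0 < h)
    (β L : ℝ) (hβ : β = 1 / max 1 (2 * lmax)) (hL : L = 1 - β * lmin)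
    (ψt : (Fin d → ℝ) → EuclideanSpace ℝ (Fin q) → EuclideanSpace ℝ (Fin q))
    (hψt : ∀ x ∈ D, ∀ (u : EuclideanSpace ℝ (Fin q)) (j : Fin q),
      ψt x u j = u j - β / h * (Vt x (u + h • EuclideanSpace.single j 1) - Vt x u)) :
    ∀ x ∈ D, ∀ K : ℕ, 1 ≤ K →
      ‖(ψt x)^[K] u₀ - ustar x‖ ≤
        γ * L ^ K + C₁ * Real.sqrt q * K * h + 2 * Real.sqrt q * K * h⁻¹ * e₁ := by
  intro x hx K _
  have hHess' : ∀ u v, lmin * ‖v‖ ^ 2 ≤ fderiv ℝ (fderiv ℝ (V x)) u v v ∧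
      fderiv ℝ (fderiv ℝ (V x)) u v v ≤ lmax * ‖v‖ ^ 2 := by
    simpa [iteratedFDeriv_two_apply] using hHess x hx
  have hβ0 : 0 < β := by rw [hβ]; positivity
  have hβ1 : β ≤ 1 := by rw [hβ]; exact div_le_one_of_le₀ (le_max_left _ _) (by positivity)
  have hβM : β * lmax ≤ 1 := by
    rw [hβ, one_div, inv_mul_le_iff₀ (by positivity)]
    linarith [le_max_right 1 (2 * lmax)]
  have hL0 : 0 ≤ L := by nlinarith [mul_le_mul_of_nonneg_left hle hβ0.le]
  have hL1 : L ≤ 1 := by nlinarith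
  have hcontr : ∀ u, dist (u - β • ∇ (V x) u) (ustar x) ≤ L * dist u (ustar x) :=
    hL ▸ dist_gradientStep_le_of_forall_le (hV x hx) hHess' hle hβ0.le hβM (hustar x hx)
  have hC : ∀ y j, |fderiv ℝ (fderiv ℝ (V x)) y (EuclideanSpace.single j 1)
      (EuclideanSpace.single j 1)| ≤ C₁ := fun y j =>
    abs_le.2 ⟨by nlinarith [(hHess' y (EuclideanSpace.single j 1)).1, hl.le, hC₁],
      by simpa [iteratedFDeriv_two_apply] using hdiag x hx y j⟩
  have hstep : ∀ u, dist (ψt x u) (u - β • ∇ (V x) u) ≤ √q * (C₁ * h + 2 * h⁻¹ * e₁) := by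
    intro u
    simpa using EuclideanSpace.dist_forwardDifferenceStep_gradientStep_le (hV x hx) hC (hVt x hx)
      hh hβ0.le hβ1 (hψt x hx u)
  have hK := dist_iterate_le_of_perturbed_contraction hcontr hL0 hL1 hstep u₀ K
  rw [dist_eq_norm, dist_eq_norm] at hK
  calc ‖(ψt x)^[K] u₀ - ustar x‖
      ≤ L ^ K * ‖u₀ - ustar x‖ + K * (√q * (C₁ * h + 2 * h⁻¹ * e₁)) := hK
    _ ≤ L ^ K * γ + K * (√q * (C₁ * h + 2 * h⁻¹ * e₁)) := by gcongr; exact hu₀ x hx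
    _ = γ * L ^ K + C₁ * Real.sqrt q * K * h + 2 * Real.sqrt q * K * h⁻¹ * e₁ := by ring

theorem statement13 (d q : ℕ) (D : Set (Fin d → ℝ))
    (V Vt : (Fin d → ℝ) → EuclideanSpace ℝ (Fin q) → ℝ)
    (hV : ∀ x ∈ D, ContDiff ℝ 2 (V x))
    (lmin lmax : ℝ) (hl : 0 < lmin) (hle : lmin ≤ lmax)
    (hHess : ∀ x ∈ D, ∀ u v : EuclideanSpace ℝ (Fin q),
      lmin * ‖v‖ ^ 2 ≤ iteratedFDeriv ℝ 2 (V x) u ![v, v] ∧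
        iteratedFDeriv ℝ 2 (V x) u ![v, v] ≤ lmax * ‖v‖ ^ 2)
    (C₁ : ℝ) (hC₁ : 0 < C₁)
    (hdiag : ∀ x ∈ D, ∀ (u : EuclideanSpace ℝ (Fin q)) (j : Fin q),
      iteratedFDeriv ℝ 2 (V x) u
        ![EuclideanSpace.single j 1, EuclideanSpace.single j 1] ≤ C₁)
    (ustar : (Fin d → ℝ) → EuclideanSpace ℝ (Fin q))
    (hustar : ∀ x ∈ D, ∀ u, V x (ustar x) ≤ V x u)
    (u₀ : EuclideanSpace ℝ (Fin q)) (γ : ℝ) (hγ : 0 < γ)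
    (hu₀ : ∀ x ∈ D, ‖u₀ - ustar x‖ ≤ γ)
    (e₁ : ℝ) (he₁ : 0 < e₁)
    (hVt : ∀ x ∈ D, ∀ u, |V x u - Vt x u| ≤ e₁)
    (h : ℝ) (hh : 0 < h)
    (β L : ℝ) (hβ : β = 1 / max 1 (2 * lmax)) (hL : L = 1 - β * lmin)
    (ψt : (Fin d → ℝ) → EuclideanSpace ℝ (Fin q) → EuclideanSpace ℝ (Fin q))
    (hψt : ∀ x ∈ D, ∀ (u : EuclideanSpace ℝ (Fin q)) (j : Fin q),
      ψt x u j = u j - β / h * (Vt x (u + h • EuclideanSpace.single j 1) - Vt x u)) :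
    ∀ x ∈ D, ∀ K : ℕ, 1 ≤ K →
      ‖(ψt x)^[K] u₀ - ustar x‖ ≤
        γ * L ^ K + C₁ * Real.sqrt q * K * h + 2 * Real.sqrt q * K * h⁻¹ * e₁ :=
  statement13_general d q D V Vt hV lmin lmax hl hle hHess C₁ hC₁ hdiag ustar hustar u₀ γ hu₀ e₁ hVt
    h hh β L hβ hL ψt hψt
end
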